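/- arXiv:1701.07192 — 8 statements merged into one kernel-verified Lean document; each statement's English description precedes it below -/
import Mathlib

section
/- In a completely regular ordered semigroup S, for every element a there exists h in S such that a ≤ aha, a ≤ a²h, and a ≤ ha². -/
open Pointwise

variable {S : Type*} [Semigroup S] [PartialOrder S]
  [CovariantClass S S (· * ·) (· ≤ ·)]
  [CovariantClass S S (Function.swap (· * ·)) (· ≤ ·)]

/-- The downward closure `(H] = {t : t ≤ h for some h ∈ H}`. -/
def ocl (H : Set S) : Set S := {t | ∃ h ∈ H, t ≤ h}
/-- Principal left ideal `L(a) = (a ∪ Sa]`. -/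
def pL (a : S) : Set S := ocl ({a} ∪ Set.univ * {a})
/-- Principal right ideal `R(a) = (a ∪ aS]`. -/
def pR (a : S) : Set S := ocl ({a} ∪ {a} * Set.univ)
/-- Principal bi-ideal `B(a) = (a ∪ a² ∪ aSa]`. -/
def pB (a : S) : Set S := ocl ({a} ∪ {a * a} ∪ {a} * Set.univ * {a})
def LIdeal (I : Set S) : Prop := I.Nonempty ∧ Set.univ * I ⊆ I ∧ ocl I = I
def RIdeal (I : Set S) : Prop := I.Nonempty ∧ I * Set.univ ⊆ I ∧ ocl I = I
def BIdeal (B : Set S) : Prop :=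
  B.Nonempty ∧ B * B ⊆ B ∧ B * Set.univ * B ⊆ B ∧ ocl B = B
def MinBIdeal (B : Set S) : Prop :=
  BIdeal B ∧ ∀ K : Set S, BIdeal K → K ⊆ B → K = B
def MinLIdeal (I : Set S) : Prop :=
  LIdeal I ∧ ∀ K : Set S, LIdeal K → K ⊆ I → K = I
def MinRIdeal (I : Set S) : Prop :=
  RIdeal I ∧ ∀ K : Set S, RIdeal K → K ⊆ I → K = I
def OrdRegular (S : Type*) [Semigroup S] [PartialOrder S] : Prop :=
  ∀ a : S, ∃ s : S, a ≤ a * s * a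
def ComplRegular (S : Type*) [Semigroup S] [PartialOrder S] : Prop :=
  ∀ a : S, ∃ s : S, a ≤ a * a * s * (a * a)
/-- Green's H relation. -/
def HGreen (a b : S) : Prop := pL a = pL b ∧ pR a = pR b
/-- The relation β : `a β b` iff `B(a) = B(b)`. -/
def betaRel (a b : S) : Prop := pB a = pB b

theorem stmt0 (h : ComplRegular S) :
    ∀ a : S, ∃ h : S, a ≤ a * h * a ∧ a ≤ a * a * h ∧ a ≤ h * (a * a) := by
  intro a
  obtain ⟨s, hs⟩ := h a
  set b := a * a * s * (a * a) with hb
  have h1 : b ≤ a * b * s * (a * a) := by rw [hb]; gcongr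
  have h2 : b ≤ a * a * s * (b * a) := by rw [hb]; gcongr
  refine ⟨a * a * s * (a * a) * s * (a * a) * s * (a * a), ?_, ?_, ?_⟩
  · calc a ≤ b := hs
      _ ≤ a * b * s * (a * a) := h1
      _ ≤ a * b * s * (b * a) := by gcongr
      _ = a * (a * a * s * (a * a) * s * (a * a) * s * (a * a)) * a := by
          rw [hb]; simp only [mul_assoc]
  · calc a ≤ b := hs
      _ ≤ a * b * s * (a * a) := h1
      _ ≤ a * (a * b * s * (a * a)) * s * (a * a) := by gcongr
      _ = a * a * (a * a * s * (a * a) * s * (a * a) * s * (a * a)) := by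
          rw [hb]; simp only [mul_assoc]
  · calc a ≤ b := hs
      _ ≤ a * a * s * (b * a) := h2
      _ ≤ a * a * s * ((a * a * s * (b * a)) * a) := by gcongr
      _ = a * a * s * (a * a) * s * (a * a) * s * (a * a) * (a * a) := by
          rw [hb]; simp only [mul_assoc]
end

section
/- If S is a regular semigroup (without order), then the semilattice-ordered semigroup P(S) of nonempty finite subsets of S, with setwise multiplication and inclusion order, is a regular ordered semigroup, i.e., for every A ∈ P(S), A ∈ (A·P(S)·A]. -/
open Pointwise

/-- If `S` is a regular semigroup, then the ordered semigroup `P(S)` of nonempty finite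
subsets of `S` (setwise product, inclusion order) is a regular ordered semigroup:
every `A ∈ P(S)` satisfies `A ∈ (A · P(S) · A]`, i.e. `A ⊆ A * X * A` for some
nonempty finite `X`. -/
theorem stmt2 {S : Type*} [Semigroup S] (hreg : ∀ a : S, ∃ x : S, a = a * x * a)
    (A : Set S) (hfin : A.Finite) (hne : A.Nonempty) :
    ∃ X : Set S, X.Finite ∧ X.Nonempty ∧ A ⊆ A * X * A := by
  choose f hf using hreg
  refine ⟨f '' A, hfin.image f, hne.image f, fun a ha => ?_⟩
  exact ⟨a * f a, ⟨a, ha, f a, ⟨a, ha, rfl⟩, rfl⟩, a, ha, (hf a).symm⟩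
end

section
/- In a regular ordered semigroup S, for every a ∈ S, the principal bi-ideal equals the rounded product of the principal right and left ideals: B(a) = (R(a)L(a)]. -/
open Pointwise

variable {S : Type*} [Semigroup S] [PartialOrder S]
  [CovariantClass S S (· * ·) (· ≤ ·)]
  [CovariantClass S S (Function.swap (· * ·)) (· ≤ ·)]

theorem stmt3 (h : OrdRegular S) (a : S) :
    pB a = ocl (pR a * pL a) := by
  obtain ⟨s, hs⟩ := h a
  have haR : a ∈ pR a := ⟨a, Or.inl rfl, le_refl _⟩
  have haL : a ∈ pL a := ⟨a, Or.inl rfl, le_refl _⟩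
  have haSR : ∀ u : S, a * u ∈ pR a := fun u =>
    ⟨a * u, Or.inr (Set.mul_mem_mul rfl (Set.mem_univ u)), le_refl _⟩
  have haSL : ∀ v : S, v * a ∈ pL a := fun v =>
    ⟨v * a, Or.inr (Set.mul_mem_mul (Set.mem_univ v) rfl), le_refl _⟩
  ext x
  constructor
  · rintro ⟨t, ht, hxt⟩
    rcases ht with (ht | ht) | ht
    · exact ⟨a * s * a, Set.mul_mem_mul (haSR s) haL,
        (hxt.trans_eq ht).trans hs⟩
    · exact ⟨a * a, Set.mul_mem_mul haR haL, hxt.trans_eq ht⟩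
    · obtain ⟨w, ⟨p, hp, u, -, rfl⟩, q, hq, rfl⟩ := ht
      rw [Set.mem_singleton_iff] at hp hq
      simp only [hp, hq] at hxt
      exact ⟨a * u * a, Set.mul_mem_mul (haSR u) haL, hxt⟩
  · rintro ⟨t, ht, hxt⟩
    obtain ⟨r, hr, l, hl, rfl⟩ := ht
    obtain ⟨r', hr', hrr⟩ := hr
    obtain ⟨l', hl', hll⟩ := hl
    have hle : x ≤ r' * l' := hxt.trans (mul_le_mul' hrr hll)
    rcases hr' with hr' | ⟨p, hp, u, -, rfl⟩ <;>
      rcases hl' with hl' | ⟨v, -, q, hq, rfl⟩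
    · rw [Set.mem_singleton_iff] at hr' hl'
      rw [hr', hl'] at hle
      exact ⟨a * a, Or.inl (Or.inr rfl), hle⟩
    · rw [Set.mem_singleton_iff] at hr' hq
      rw [hr', hq] at hle
      refine ⟨a * v * a, Or.inr (Set.mul_mem_mul
        (Set.mul_mem_mul rfl (Set.mem_univ v)) rfl), ?_⟩
      rwa [mul_assoc]
    · rw [Set.mem_singleton_iff] at hp hl'
      rw [hp, hl'] at hle
      exact ⟨a * u * a, Or.inr (Set.mul_mem_mul
        (Set.mul_mem_mul rfl (Set.mem_univ u)) rfl), hle⟩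
    · rw [Set.mem_singleton_iff] at hp hq
      rw [hp, hq] at hle
      refine ⟨a * (u * v) * a, Or.inr (Set.mul_mem_mul
        (Set.mul_mem_mul rfl (Set.mem_univ (u * v))) rfl), ?_⟩
      calc x ≤ a * u * (v * a) := hle
        _ = a * (u * v) * a := by simp [mul_assoc]
end

section
/- In a regular ordered semigroup S, a nonempty subset A is a bi-ideal of S if and only if A = (RL] for some right ideal R and left ideal L of S. -/
open Pointwise

variable {S : Type*} [Semigroup S] [PartialOrder S]
  [CovariantClass S S (· * ·) (· ≤ ·)]
  [CovariantClass S S (Function.swap (· * ·)) (· ≤ ·)]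

/-! For a bi-ideal `A` put `R = (AS]` and `L = (SA]`. Then `(RL] ⊆ (ASSA] ⊆ (ASA] ⊆ A`, and regularity
gives the reverse inclusion, since `a ≤ (as)a` with `as ∈ R` and `a ≤ (as)a ∈ SA`. Conversely `(RL]` is a
bi-ideal for any right ideal `R` and left ideal `L`, because `RL·RL` and `RL·S·RL` both lie in `R·S·L ⊆ RL`. -/

open Set

section Closure

variable {α : Type*} [PartialOrder α]

lemma subset_ocl (H : Set α) : H ⊆ ocl H := fun x hx => ⟨x, hx, le_rfl⟩

lemma ocl_mono {H K : Set α} (h : H ⊆ K) : ocl H ⊆ ocl K :=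
  fun _ ⟨a, ha, hx⟩ => ⟨a, h ha, hx⟩

lemma ocl_ocl (H : Set α) : ocl (ocl H) = ocl H :=
  (subset_ocl _).antisymm' fun _ ⟨_, ⟨b, hb, hab⟩, hx⟩ => ⟨b, hb, hx.trans hab⟩

lemma ocl_mul_subset [Mul α] [MulRightMono α] (H K : Set α) : ocl H * K ⊆ ocl (H * K) := by
  rintro _ ⟨x, ⟨h, hh, hxh⟩, k, hk, rfl⟩
  exact ⟨h * k, mul_mem_mul hh hk, mul_le_mul_left hxh k⟩

lemma mul_ocl_subset [Mul α] [MulLeftMono α] (H K : Set α) : H * ocl K ⊆ ocl (H * K) := by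
  rintro _ ⟨h, hh, x, ⟨k, hk, hxk⟩, rfl⟩
  exact ⟨h * k, mul_mem_mul hh hk, mul_le_mul_right hxk h⟩

lemma ocl_mul_ocl_subset [Mul α] [MulLeftMono α] [MulRightMono α] (H K : Set α) :
    ocl H * ocl K ⊆ ocl (H * K) :=
  calc ocl H * ocl K ⊆ ocl (H * ocl K) := ocl_mul_subset _ _
    _ ⊆ ocl (ocl (H * K)) := ocl_mono (mul_ocl_subset _ _)
    _ = ocl (H * K) := ocl_ocl _

end Closure

variable {α : Type*} [Semigroup α]

lemma mul_univ_mul_univ_subset (A : Set α) : A * univ * univ ⊆ A * univ := by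
  rw [mul_assoc]
  exact mul_subset_mul_left (subset_univ _)

lemma univ_mul_univ_mul_subset (A : Set α) : univ * (univ * A) ⊆ univ * A := by
  rw [← mul_assoc]
  exact mul_subset_mul_right (subset_univ _)

variable [PartialOrder α]

lemma RIdeal.mul_subset {R : Set α} (hR : RIdeal R) (X : Set α) : R * X ⊆ R :=
  (mul_subset_mul_left (subset_univ X)).trans hR.2.1

lemma LIdeal.mul_subset {L : Set α} (hL : LIdeal L) (X : Set α) : X * L ⊆ L :=
  (mul_subset_mul_right (subset_univ X)).trans hL.2.1

lemma rIdeal_ocl_mul_univ [MulRightMono α] {A : Set α} (hA : A.Nonempty) :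
    RIdeal (ocl (A * univ)) :=
  ⟨(hA.mul (hA.mono (subset_univ A))).mono (subset_ocl _),
    (ocl_mul_subset _ _).trans (ocl_mono (mul_univ_mul_univ_subset A)), ocl_ocl _⟩

lemma lIdeal_ocl_univ_mul [MulLeftMono α] {A : Set α} (hA : A.Nonempty) :
    LIdeal (ocl (univ * A)) :=
  ⟨((hA.mono (subset_univ A)).mul hA).mono (subset_ocl _),
    (mul_ocl_subset _ _).trans (ocl_mono (univ_mul_univ_mul_subset A)), ocl_ocl _⟩

variable [MulLeftMono α] [MulRightMono α]

lemma bIdeal_ocl_mul {R L : Set α} (hR : RIdeal R) (hL : LIdeal L) : BIdeal (ocl (R * L)) := by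
  have absorb : ∀ X : Set α, R * X * L ⊆ R * L := fun X =>
    mul_subset_mul_right (hR.mul_subset X)
  refine ⟨(hR.1.mul hL.1).mono (subset_ocl _), ?_, ?_, ocl_ocl _⟩
  · calc ocl (R * L) * ocl (R * L) ⊆ ocl (R * L * (R * L)) := ocl_mul_ocl_subset _ _
      _ = ocl (R * (L * R) * L) := by simp only [mul_assoc]
      _ ⊆ ocl (R * L) := ocl_mono (absorb _)
  · calc ocl (R * L) * (univ : Set α) * ocl (R * L) ⊆ ocl (R * L * univ) * ocl (R * L) :=
          mul_subset_mul_right (ocl_mul_subset _ _)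
      _ ⊆ ocl (R * L * univ * (R * L)) := ocl_mul_ocl_subset _ _
      _ = ocl (R * (L * univ * R) * L) := by simp only [mul_assoc]
      _ ⊆ ocl (R * L) := ocl_mono (absorb _)

lemma BIdeal.eq_ocl_mul_ocl {A : Set α} (hA : BIdeal A) (h : OrdRegular α) :
    A = ocl (ocl (A * univ) * ocl (univ * A)) := by
  refine subset_antisymm (fun a ha => ?_) ?_
  · obtain ⟨s, hs⟩ := h a
    exact ⟨a * s * a, mul_mem_mul (subset_ocl _ (mul_mem_mul ha (mem_univ s)))
      ⟨a * s * a, mul_mem_mul (mem_univ (a * s)) ha, hs⟩, hs⟩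
  · calc ocl (ocl (A * univ) * ocl (univ * A)) ⊆ ocl (A * univ * (univ * A)) :=
          (ocl_mono (ocl_mul_ocl_subset _ _)).trans_eq (ocl_ocl _)
      _ = ocl (A * univ * univ * A) := by simp only [mul_assoc]
      _ ⊆ ocl (A * univ * A) := ocl_mono (mul_subset_mul_right (mul_univ_mul_univ_subset A))
      _ ⊆ ocl A := ocl_mono hA.2.2.1
      _ = A := hA.2.2.2

theorem stmt5_general (h : OrdRegular S) (A : Set S) :
    BIdeal A ↔ ∃ R L : Set S, RIdeal R ∧ LIdeal L ∧ A = ocl (R * L) := by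
  constructor
  · intro hA
    exact ⟨_, _, rIdeal_ocl_mul_univ hA.1, lIdeal_ocl_univ_mul hA.1, hA.eq_ocl_mul_ocl h⟩
  · rintro ⟨R, L, hR, hL, rfl⟩
    exact bIdeal_ocl_mul hR hL

theorem stmt5 (h : OrdRegular S) (A : Set S) (hA : A.Nonempty) :
    BIdeal A ↔ ∃ R L : Set S, RIdeal R ∧ LIdeal L ∧ A = ocl (R * L) :=
  stmt5_general h A
end

section
/- Let S be a regular ordered semigroup. A nonempty subset B of S is a minimal bi-ideal of S if and only if B = (RL] for some minimal right ideal R and some minimal left ideal L of S. -/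
open Pointwise

variable {S : Type*} [Semigroup S] [PartialOrder S]
  [CovariantClass S S (· * ·) (· ≤ ·)]
  [CovariantClass S S (Function.swap (· * ·)) (· ≤ ·)]

lemma subset_ocl_s7 (X : Set S) : X ⊆ ocl X := fun x hx => ⟨x, hx, le_refl x⟩

lemma ocl_mono_s7 {X Y : Set S} (h : X ⊆ Y) : ocl X ⊆ ocl Y := by
  rintro t ⟨x, hx, ht⟩; exact ⟨x, h hx, ht⟩

lemma ocl_ocl_s7 (X : Set S) : ocl (ocl X) = ocl X := by
  apply subset_antisymm
  · rintro t ⟨u, ⟨x, hx, hu⟩, ht⟩; exact ⟨x, hx, ht.trans hu⟩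
  · exact subset_ocl_s7 _

lemma ocl_nonempty {X : Set S} (h : X.Nonempty) : (ocl X).Nonempty :=
  h.mono (subset_ocl_s7 X)

lemma ocl_mul_ocl (X Y : Set S) : ocl X * ocl Y ⊆ ocl (X * Y) := by
  rintro z hz
  obtain ⟨u, ⟨x, hx, hux⟩, v, ⟨y, hy, hvy⟩, rfl⟩ := Set.mem_mul.mp hz
  exact ⟨x * y, Set.mul_mem_mul hx hy, mul_le_mul' hux hvy⟩

lemma ocl_mul_left (X Y : Set S) : ocl X * Y ⊆ ocl (X * Y) :=
  (Set.mul_subset_mul_left (subset_ocl_s7 Y)).trans (ocl_mul_ocl X Y)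

lemma mul_ocl_right (X Y : Set S) : X * ocl Y ⊆ ocl (X * Y) :=
  (Set.mul_subset_mul_right (subset_ocl_s7 X)).trans (ocl_mul_ocl X Y)

/-- `(RL] = R ∩ L` for a right ideal `R` and left ideal `L` in a regular ordered semigroup. -/
lemma oclRL_eq_inter (h : OrdRegular S) {R L : Set S} (hR : RIdeal R) (hL : LIdeal L) :
    ocl (R * L) = R ∩ L := by
  apply subset_antisymm
  · intro t ht
    constructor
    · have : ocl (R * L) ⊆ ocl R := ocl_mono_s7
        ((Set.mul_subset_mul_left (Set.subset_univ L)).trans hR.2.1)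
      exact (hR.2.2 ▸ this) ht
    · have : ocl (R * L) ⊆ ocl L := ocl_mono_s7
        ((Set.mul_subset_mul_right (Set.subset_univ R)).trans hL.2.1)
      exact (hL.2.2 ▸ this) ht
  · rintro a ⟨haR, haL⟩
    obtain ⟨s, hs⟩ := h a
    refine ⟨a * s * a, Set.mul_mem_mul ?_ haL, hs⟩
    exact hR.2.1 (Set.mul_mem_mul haR (Set.mem_univ s))


lemma rideal_ocl_mul_subset {K : Set S} (hK : K * Set.univ ⊆ K) (hc : ocl K = K)
    (X : Set S) : ocl (K * X) ⊆ K := by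
  have h1 : ocl (K * X) ⊆ ocl K :=
    ocl_mono_s7 ((Set.mul_subset_mul_left (Set.subset_univ X)).trans hK)
  rwa [hc] at h1

lemma lideal_ocl_mul_subset {K : Set S} (hK : Set.univ * K ⊆ K) (hc : ocl K = K)
    (X : Set S) : ocl (X * K) ⊆ K := by
  have h1 : ocl (X * K) ⊆ ocl K :=
    ocl_mono_s7 ((Set.mul_subset_mul_right (Set.subset_univ X)).trans hK)
  rwa [hc] at h1

/-- `(RL]` is a bi-ideal for right ideal `R` and left ideal `L` in a regular ordered semigroup. -/
lemma oclRL_biideal (h : OrdRegular S) {R L : Set S} (hR : RIdeal R) (hL : LIdeal L) :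
    BIdeal (ocl (R * L)) := by
  rw [oclRL_eq_inter h hR hL]
  refine ⟨?_, ?_, ?_, ?_⟩
  · obtain ⟨r, hr⟩ := hR.1
    obtain ⟨l, hl⟩ := hL.1
    exact ⟨r * l, hR.2.1 (Set.mul_mem_mul hr (Set.mem_univ l)),
      hL.2.1 (Set.mul_mem_mul (Set.mem_univ r) hl)⟩
  · intro z hz
    obtain ⟨x, hx, y, hy, rfl⟩ := Set.mem_mul.mp hz
    exact ⟨hR.2.1 (Set.mul_mem_mul hx.1 (Set.mem_univ y)),
      hL.2.1 (Set.mul_mem_mul (Set.mem_univ x) hy.2)⟩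
  · intro z hz
    obtain ⟨w, hw, y, hy, rfl⟩ := Set.mem_mul.mp hz
    obtain ⟨x, hx, u, _, rfl⟩ := Set.mem_mul.mp hw
    refine ⟨?_, ?_⟩
    · exact hR.2.1 (Set.mul_mem_mul (hR.2.1 (Set.mul_mem_mul hx.1 (Set.mem_univ u)))
        (Set.mem_univ y))
    · have h1 : x * (u * y) ∈ L :=
        hL.2.1 (Set.mul_mem_mul (Set.mem_univ x)
          (hL.2.1 (Set.mul_mem_mul (Set.mem_univ u) hy.2)))
      rwa [← mul_assoc] at h1
  · apply subset_antisymm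
    · intro t ht
      exact ⟨(hR.2.2 ▸ ocl_mono_s7 Set.inter_subset_left) ht,
        (hL.2.2 ▸ ocl_mono_s7 Set.inter_subset_right) ht⟩
    · exact subset_ocl_s7 _

theorem stmt7 (h : OrdRegular S) (B : Set S) (hB : B.Nonempty) :
    MinBIdeal B ↔ ∃ R L : Set S, MinRIdeal R ∧ MinLIdeal L ∧ B = ocl (R * L) := by
  constructor
  · rintro ⟨hBi, hBmin⟩
    obtain ⟨b, hb⟩ := hB
    have hbB : ({b} : Set S) ⊆ B := Set.singleton_subset_iff.mpr hb
    set R : Set S := ocl ({b} * Set.univ) with hRdef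
    set L : Set S := ocl (Set.univ * {b}) with hLdef
    obtain ⟨s, hs⟩ := h b
    have hbR : b ∈ R := ⟨b * (s * b),
      Set.mul_mem_mul rfl (Set.mem_univ _), by rwa [← mul_assoc]⟩
    have hbL : b ∈ L := ⟨(b * s) * b,
      Set.mul_mem_mul (Set.mem_univ _) rfl, hs⟩
    have hRideal : RIdeal R := by
      refine ⟨⟨b, hbR⟩, ?_, ocl_ocl_s7 _⟩
      refine (ocl_mul_left _ _).trans (ocl_mono_s7 ?_)
      rw [mul_assoc]
      exact Set.mul_subset_mul_left (Set.subset_univ _)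
    have hLideal : LIdeal L := by
      refine ⟨⟨b, hbL⟩, ?_, ocl_ocl_s7 _⟩
      refine (mul_ocl_right _ _).trans (ocl_mono_s7 ?_)
      rw [← mul_assoc]
      exact Set.mul_subset_mul_right (Set.subset_univ _)
    -- ocl (R * L) ⊆ B
    have hRLB : ocl (R * L) ⊆ B := by
      have h1 : R * L ⊆ ocl ((({b} : Set S) * Set.univ) * (Set.univ * {b})) := ocl_mul_ocl _ _
      have h2 : (({b} : Set S) * Set.univ) * (Set.univ * {b}) ⊆ ({b} : Set S) * Set.univ * {b} := by
        rw [mul_assoc, ← mul_assoc Set.univ, ← mul_assoc]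
        exact Set.mul_subset_mul_right (Set.mul_subset_mul_left (Set.subset_univ _))
      have h3 : ({b} : Set S) * Set.univ * {b} ⊆ B * Set.univ * B := by
        intro z hz
        obtain ⟨w, hw, y, hy, rfl⟩ := Set.mem_mul.mp hz
        obtain ⟨x, hx, u, hu, rfl⟩ := Set.mem_mul.mp hw
        exact Set.mul_mem_mul (Set.mul_mem_mul (hbB hx) hu) (hbB hy)
      calc ocl (R * L) ⊆ ocl (ocl ({b} * Set.univ * (Set.univ * {b}))) := ocl_mono_s7 h1
        _ = ocl ({b} * Set.univ * (Set.univ * {b})) := ocl_ocl_s7 _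
        _ ⊆ ocl B := ocl_mono_s7 ((h2.trans h3).trans hBi.2.2.1)
        _ = B := hBi.2.2.2
    have hBeq : ocl (R * L) = B :=
      hBmin _ (oclRL_biideal h hRideal hLideal) hRLB
    refine ⟨R, L, ⟨hRideal, ?_⟩, ⟨hLideal, ?_⟩, hBeq.symm⟩
    · intro K hK hKR
      have hKLB : ocl (K * L) ⊆ B :=
        hBeq ▸ ocl_mono_s7 (Set.mul_subset_mul_right hKR)
      have hKL : ocl (K * L) = B :=
        hBmin _ (oclRL_biideal h hK hLideal) hKLB
      have hbK : b ∈ K := rideal_ocl_mul_subset hK.2.1 hK.2.2 L (hKL ▸ hb)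
      apply subset_antisymm hKR
      rw [hRdef]
      exact (ocl_mono_s7 (Set.mul_subset_mul_right (Set.singleton_subset_iff.mpr hbK))).trans
        (rideal_ocl_mul_subset hK.2.1 hK.2.2 Set.univ)
    · intro K hK hKL
      have hRKB : ocl (R * K) ⊆ B :=
        hBeq ▸ ocl_mono_s7 (Set.mul_subset_mul_left hKL)
      have hRK : ocl (R * K) = B :=
        hBmin _ (oclRL_biideal h hRideal hK) hRKB
      have hbK : b ∈ K := lideal_ocl_mul_subset hK.2.1 hK.2.2 R (hRK ▸ hb)
      apply subset_antisymm hKL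
      rw [hLdef]
      exact (ocl_mono_s7 (Set.mul_subset_mul_left (Set.singleton_subset_iff.mpr hbK))).trans
        (lideal_ocl_mul_subset hK.2.1 hK.2.2 Set.univ)
  · rintro ⟨R, L, ⟨hRideal, hRmin⟩, ⟨hLideal, hLmin⟩, rfl⟩
    refine ⟨oclRL_biideal h hRideal hLideal, ?_⟩
    intro K hK hKB
    have hinter := oclRL_eq_inter h hRideal hLideal
    have hKR : K ⊆ R := hKB.trans (by rw [hinter]; exact Set.inter_subset_left)
    have hKL : K ⊆ L := hKB.trans (by rw [hinter]; exact Set.inter_subset_right)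
    obtain ⟨k, hk⟩ := hK.1
    have hK'ideal : RIdeal (ocl (K * Set.univ)) := by
      refine ⟨⟨k * k, subset_ocl_s7 _ (Set.mul_mem_mul hk (Set.mem_univ k))⟩, ?_, ocl_ocl_s7 _⟩
      refine (ocl_mul_left _ _).trans (ocl_mono_s7 ?_)
      rw [mul_assoc]
      exact Set.mul_subset_mul_left (Set.subset_univ _)
    have hK'sub : ocl (K * Set.univ) ⊆ R :=
      (ocl_mono_s7 (Set.mul_subset_mul_right hKR)).trans
        (rideal_ocl_mul_subset hRideal.2.1 hRideal.2.2 Set.univ)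
    have hK'eq : ocl (K * Set.univ) = R := hRmin _ hK'ideal hK'sub
    have hL'ideal : LIdeal (ocl (Set.univ * K)) := by
      refine ⟨⟨k * k, subset_ocl_s7 _ (Set.mul_mem_mul (Set.mem_univ k) hk)⟩, ?_, ocl_ocl_s7 _⟩
      refine (mul_ocl_right _ _).trans (ocl_mono_s7 ?_)
      rw [← mul_assoc]
      exact Set.mul_subset_mul_right (Set.subset_univ _)
    have hL'sub : ocl (Set.univ * K) ⊆ L :=
      (ocl_mono_s7 (Set.mul_subset_mul_left hKL)).trans
        (lideal_ocl_mul_subset hLideal.2.1 hLideal.2.2 Set.univ)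
    have hL'eq : ocl (Set.univ * K) = L := hLmin _ hL'ideal hL'sub
    apply subset_antisymm hKB
    rw [← hK'eq, ← hL'eq]
    have h1 : ocl (K * Set.univ) * ocl (Set.univ * K) ⊆
        ocl ((K * Set.univ) * (Set.univ * K)) := ocl_mul_ocl _ _
    have h2 : (K * Set.univ) * (Set.univ * K) ⊆ K * Set.univ * K := by
      rw [mul_assoc, ← mul_assoc Set.univ, ← mul_assoc]
      exact Set.mul_subset_mul_right (Set.mul_subset_mul_left (Set.subset_univ _))
    calc ocl (ocl (K * Set.univ) * ocl (Set.univ * K))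
        ⊆ ocl (ocl ((K * Set.univ) * (Set.univ * K))) := ocl_mono_s7 h1
      _ = ocl ((K * Set.univ) * (Set.univ * K)) := ocl_ocl_s7 _
      _ ⊆ ocl K := ocl_mono_s7 (h2.trans hK.2.2.1)
      _ = K := hK.2.2.2
end

section
/- In an ordered semigroup S, a bi-ideal B is minimal if and only if B(a) = B(b) for all a, b ∈ B, where B(x) denotes the principal bi-ideal (x ∪ x² ∪ xSx]. -/
open Pointwise

variable {S : Type*} [Semigroup S] [PartialOrder S]
  [CovariantClass S S (· * ·) (· ≤ ·)]
  [CovariantClass S S (Function.swap (· * ·)) (· ≤ ·)]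

set_option linter.unusedSectionVars false

lemma mem_genB {a x : S} :
    x ∈ ({a} ∪ {a * a} ∪ {a} * Set.univ * {a} : Set S) ↔
      x = a ∨ x = a * a ∨ ∃ s, x = a * s * a := by
  simp only [Set.mem_union, Set.mem_singleton_iff, Set.mem_mul, Set.mem_univ]
  constructor
  · rintro ((h|h)|⟨u, ⟨y, rfl, z, -, rfl⟩, v, rfl, rfl⟩)
    · exact Or.inl h
    · exact Or.inr (Or.inl h)
    · exact Or.inr (Or.inr ⟨_, rfl⟩)
  · rintro (h|h|⟨s,rfl⟩)
    · exact Or.inl (Or.inl h)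
    · exact Or.inl (Or.inr h)
    · exact Or.inr ⟨a*s, ⟨a, rfl, s, trivial, rfl⟩, a, rfl, rfl⟩

lemma mem_pB_iff {a x : S} :
    x ∈ pB a ↔ ∃ h, (h = a ∨ h = a * a ∨ ∃ s, h = a * s * a) ∧ x ≤ h := by
  constructor
  · rintro ⟨h, hh, hx⟩; exact ⟨h, mem_genB.mp hh, hx⟩
  · rintro ⟨h, hh, hx⟩; exact ⟨h, mem_genB.mpr hh, hx⟩

lemma self_mem_pB (a : S) : a ∈ pB a := mem_pB_iff.mpr ⟨a, Or.inl rfl, le_rfl⟩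

lemma gen_left {a u : S} (hu : u = a ∨ u = a * a ∨ ∃ s, u = a * s * a) :
    u = a ∨ ∃ p, u = a * p := by
  rcases hu with rfl | rfl | ⟨s, rfl⟩
  · exact Or.inl rfl
  · exact Or.inr ⟨a, rfl⟩
  · exact Or.inr ⟨s * a, by simp [mul_assoc]⟩

lemma gen_right {a v : S} (hv : v = a ∨ v = a * a ∨ ∃ s, v = a * s * a) :
    v = a ∨ ∃ q, v = q * a := by
  rcases hv with rfl | rfl | ⟨s, rfl⟩
  · exact Or.inl rfl
  · exact Or.inr ⟨a, rfl⟩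
  · exact Or.inr ⟨a * s, rfl⟩

lemma gen_mul {a u v : S} (hu : u = a ∨ ∃ p, u = a * p) (hv : v = a ∨ ∃ q, v = q * a) :
    u * v = a * a ∨ ∃ s, u * v = a * s * a := by
  rcases hu with rfl | ⟨p, rfl⟩ <;> rcases hv with rfl | ⟨q, rfl⟩
  · exact Or.inl rfl
  · exact Or.inr ⟨q, by simp [mul_assoc]⟩
  · exact Or.inr ⟨p, by simp [mul_assoc]⟩
  · exact Or.inr ⟨p * q, by simp [mul_assoc]⟩

lemma gen_mid {a u v m : S} (hu : u = a ∨ ∃ p, u = a * p) (hv : v = a ∨ ∃ q, v = q * a) :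
    ∃ s, u * m * v = a * s * a := by
  rcases hu with rfl | ⟨p, rfl⟩ <;> rcases hv with rfl | ⟨q, rfl⟩
  · exact ⟨m, rfl⟩
  · exact ⟨m * q, by simp [mul_assoc]⟩
  · exact ⟨p * m, by simp [mul_assoc]⟩
  · exact ⟨p * (m * q), by simp [mul_assoc]⟩

lemma pB_subset {a : S} {B : Set S} (hB : BIdeal B) (ha : a ∈ B) : pB a ⊆ B := by
  obtain ⟨-, hmul, hbsb, hocl⟩ := hB
  intro x hx
  obtain ⟨h, hh, hxh⟩ := mem_pB_iff.mp hx
  have hhB : h ∈ B := by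
    rcases hh with rfl | rfl | ⟨s, rfl⟩
    · exact ha
    · exact hmul (Set.mul_mem_mul ha ha)
    · exact hbsb (Set.mul_mem_mul (Set.mul_mem_mul ha (Set.mem_univ s)) ha)
  exact hocl ▸ ⟨h, hhB, hxh⟩

lemma pB_bideal (a : S) : BIdeal (pB a) := by
  refine ⟨⟨a, self_mem_pB a⟩, ?_, ?_, ?_⟩
  · rintro x ⟨y, hy, z, hz, rfl⟩
    obtain ⟨u, hu, hyu⟩ := mem_pB_iff.mp hy
    obtain ⟨v, hv, hzv⟩ := mem_pB_iff.mp hz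
    refine mem_pB_iff.mpr ⟨u * v, ?_, mul_le_mul' hyu hzv⟩
    rcases gen_mul (gen_left hu) (gen_right hv) with h | h
    · exact Or.inr (Or.inl h)
    · exact Or.inr (Or.inr h)
  · rintro x ⟨w, ⟨y, hy, m, -, rfl⟩, z, hz, rfl⟩
    obtain ⟨u, hu, hyu⟩ := mem_pB_iff.mp hy
    obtain ⟨v, hv, hzv⟩ := mem_pB_iff.mp hz
    refine mem_pB_iff.mpr ⟨u * m * v, ?_, mul_le_mul' (mul_le_mul' hyu le_rfl) hzv⟩
    exact Or.inr (Or.inr (gen_mid (gen_left hu) (gen_right hv)))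
  · apply Set.Subset.antisymm
    · rintro x ⟨h, hh, hx⟩
      obtain ⟨u, hu, hhu⟩ := mem_pB_iff.mp hh
      exact mem_pB_iff.mpr ⟨u, hu, hx.trans hhu⟩
    · intro x hx; exact ⟨x, hx, le_rfl⟩

theorem stmt9 (B : Set S) (hB : BIdeal B) :
    MinBIdeal B ↔ ∀ a ∈ B, ∀ b ∈ B, pB a = pB b := by
  constructor
  · rintro ⟨-, hmin⟩ a ha b hb
    rw [hmin (pB a) (pB_bideal a) (pB_subset hB ha),
        hmin (pB b) (pB_bideal b) (pB_subset hB hb)]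
  · intro h
    refine ⟨hB, fun K hK hKB => Set.Subset.antisymm hKB fun b hb => ?_⟩
    obtain ⟨k, hk⟩ := hK.1
    have hbk : pB b = pB k := h b hb k (hKB hk)
    exact pB_subset hK hk (hbk ▸ self_mem_pB b)
end

section
/- In any ordered semigroup S, the relation β defined by a β b iff B(a) = B(b) is contained in Green's relation H (defined by equality of principal left and principal right ideals); if moreover S is regular, then β = H. -/
open Pointwise

variable {S : Type*} [Semigroup S] [PartialOrder S]
  [CovariantClass S S (· * ·) (· ≤ ·)]
  [CovariantClass S S (Function.swap (· * ·)) (· ≤ ·)]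

set_option linter.unusedSectionVars false

lemma mem_pL {a x : S} : x ∈ pL a ↔ (x ≤ a ∨ ∃ s, x ≤ s * a) := by
  simp [pL, ocl, Set.mem_mul]

lemma mem_pR {a x : S} : x ∈ pR a ↔ (x ≤ a ∨ ∃ s, x ≤ a * s) := by
  simp [pR, ocl, Set.mem_mul]

lemma mem_pB {a x : S} : x ∈ pB a ↔ (x ≤ a ∨ x ≤ a * a ∨ ∃ s, x ≤ a * s * a) := by
  constructor
  · rintro ⟨h, hh, hx⟩
    rcases hh with (rfl | rfl) | ⟨y, ⟨s, rfl, v, -, rfl⟩, q, rfl, rfl⟩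
    · exact Or.inl hx
    · exact Or.inr (Or.inl hx)
    · exact Or.inr (Or.inr ⟨v, hx⟩)
  · rintro (hx | hx | ⟨s, hx⟩)
    · exact ⟨a, Or.inl (Or.inl rfl), hx⟩
    · exact ⟨a * a, Or.inl (Or.inr rfl), hx⟩
    · exact ⟨a * s * a, Or.inr ⟨a * s, ⟨a, rfl, s, trivial, rfl⟩, a, rfl, rfl⟩, hx⟩

lemma pL_subset {a b : S} (h : b ∈ pL a) : pL b ⊆ pL a := by
  rcases mem_pL.1 h with hb | ⟨s, hb⟩ <;> intro x hx <;>
    rcases mem_pL.1 hx with hx | ⟨t, hx⟩ <;> apply mem_pL.2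
  · exact Or.inl (hx.trans hb)
  · exact Or.inr ⟨t, hx.trans (mul_le_mul_right hb t)⟩
  · exact Or.inr ⟨s, hx.trans hb⟩
  · refine Or.inr ⟨t * s, ?_⟩
    calc x ≤ t * b := hx
    _ ≤ t * (s * a) := mul_le_mul_right hb t
    _ = t * s * a := (mul_assoc ..).symm

lemma pR_subset {a b : S} (h : b ∈ pR a) : pR b ⊆ pR a := by
  rcases mem_pR.1 h with hb | ⟨s, hb⟩ <;> intro x hx <;>
    rcases mem_pR.1 hx with hx | ⟨t, hx⟩ <;> apply mem_pR.2
  · exact Or.inl (hx.trans hb)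
  · exact Or.inr ⟨t, hx.trans (mul_le_mul_left hb t)⟩
  · exact Or.inr ⟨s, hx.trans hb⟩
  · refine Or.inr ⟨s * t, ?_⟩
    calc x ≤ b * t := hx
    _ ≤ a * s * t := mul_le_mul_left hb t
    _ = a * (s * t) := mul_assoc ..

lemma pB_subset_s10 {a b : S} (h : b ∈ pB a) : pB b ⊆ pB a := by
  have key : ∀ x y z : S, x ∈ pB a → y ∈ pB a → z ≤ x * y → z ∈ pB a := by
    intro x y z hx hy hz
    rcases mem_pB.1 hx with hx | hx | ⟨s, hx⟩ <;>
      rcases mem_pB.1 hy with hy | hy | ⟨t, hy⟩ <;> apply mem_pB.2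
    · exact Or.inr (Or.inl (hz.trans (mul_le_mul' hx hy)))
    · refine Or.inr (Or.inr ⟨a, ?_⟩)
      calc z ≤ x * y := hz
      _ ≤ a * (a * a) := mul_le_mul' hx hy
      _ = a * a * a := by simp [mul_assoc]
    · refine Or.inr (Or.inr ⟨a * t, ?_⟩)
      calc z ≤ x * y := hz
      _ ≤ a * (a * t * a) := mul_le_mul' hx hy
      _ = a * (a * t) * a := by simp [mul_assoc]
    · refine Or.inr (Or.inr ⟨a, ?_⟩)
      calc z ≤ x * y := hz
      _ ≤ a * a * a := mul_le_mul' hx hy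
      _ = a * a * a := rfl
    · refine Or.inr (Or.inr ⟨a * a, ?_⟩)
      calc z ≤ x * y := hz
      _ ≤ a * a * (a * a) := mul_le_mul' hx hy
      _ = a * (a * a) * a := by simp [mul_assoc]
    · refine Or.inr (Or.inr ⟨a * (a * t), ?_⟩)
      calc z ≤ x * y := hz
      _ ≤ a * a * (a * t * a) := mul_le_mul' hx hy
      _ = a * (a * (a * t)) * a := by simp [mul_assoc]
    · refine Or.inr (Or.inr ⟨s * a, ?_⟩)
      calc z ≤ x * y := hz
      _ ≤ a * s * a * a := mul_le_mul' hx hy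
      _ = a * (s * a) * a := by simp [mul_assoc]
    · refine Or.inr (Or.inr ⟨s * (a * a), ?_⟩)
      calc z ≤ x * y := hz
      _ ≤ a * s * a * (a * a) := mul_le_mul' hx hy
      _ = a * (s * (a * a)) * a := by simp [mul_assoc]
    · refine Or.inr (Or.inr ⟨s * (a * (a * t)), ?_⟩)
      calc z ≤ x * y := hz
      _ ≤ a * s * a * (a * t * a) := mul_le_mul' hx hy
      _ = a * (s * (a * (a * t))) * a := by simp [mul_assoc]
  intro x hx
  rcases mem_pB.1 hx with hx' | hx' | ⟨t, hx'⟩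
  · apply mem_pB.2
    rcases mem_pB.1 h with hb | hb | ⟨s, hb⟩
    · exact Or.inl (hx'.trans hb)
    · exact Or.inr (Or.inl (hx'.trans hb))
    · exact Or.inr (Or.inr ⟨s, hx'.trans hb⟩)
  · exact key b b x h h hx'
  · rcases mem_pB.1 h with hb | hb | ⟨s, hb⟩ <;> apply mem_pB.2
    · refine Or.inr (Or.inr ⟨t, ?_⟩)
      calc x ≤ b * t * b := hx'
      _ ≤ a * t * a := mul_le_mul' (mul_le_mul_left hb t) hb
    · refine Or.inr (Or.inr ⟨a * t * a, ?_⟩)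
      calc x ≤ b * t * b := hx'
      _ ≤ a * a * t * (a * a) := mul_le_mul' (mul_le_mul_left hb t) hb
      _ = a * (a * t * a) * a := by simp [mul_assoc]
    · refine Or.inr (Or.inr ⟨s * a * t * (a * s), ?_⟩)
      calc x ≤ b * t * b := hx'
      _ ≤ a * s * a * t * (a * s * a) := mul_le_mul' (mul_le_mul_left hb t) hb
      _ = a * (s * a * t * (a * s)) * a := by simp [mul_assoc]

theorem stmt10 :
    (∀ a b : S, betaRel a b → HGreen a b) ∧
    (OrdRegular S → ∀ a b : S, betaRel a b ↔ HGreen a b) := by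
  have hBL : ∀ a b : S, b ∈ pB a → b ∈ pL a := by
    intro a b h
    rcases mem_pB.1 h with h | h | ⟨s, h⟩
    · exact mem_pL.2 (Or.inl h)
    · exact mem_pL.2 (Or.inr ⟨a, h⟩)
    · exact mem_pL.2 (Or.inr ⟨a * s, h⟩)
  have hBR : ∀ a b : S, b ∈ pB a → b ∈ pR a := by
    intro a b h
    rcases mem_pB.1 h with h | h | ⟨s, h⟩
    · exact mem_pR.2 (Or.inl h)
    · exact mem_pR.2 (Or.inr ⟨a, h⟩)
    · exact mem_pR.2 (Or.inr ⟨s * a, by rwa [← mul_assoc]⟩)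
  have self_pB : ∀ a : S, a ∈ pB a := fun a => mem_pB.2 (Or.inl le_rfl)
  have forward : ∀ a b : S, betaRel a b → HGreen a b := by
    intro a b h
    have hba : b ∈ pB a := h ▸ self_pB b
    have hab : a ∈ pB b := h.symm ▸ self_pB a
    exact ⟨Set.Subset.antisymm (pL_subset (hBL b a hab)) (pL_subset (hBL a b hba)),
           Set.Subset.antisymm (pR_subset (hBR b a hab)) (pR_subset (hBR a b hba))⟩
  refine ⟨forward, fun hreg a b => ⟨forward a b, fun hg => ?_⟩⟩
  obtain ⟨hL, hR⟩ := hg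
  have key : ∀ x y : S, pL x = pL y → pR x = pR y → y ∈ pB x := by
    intro x y hL hR
    obtain ⟨s, hs⟩ := hreg y
    have hyL : y ∈ pL x := hL ▸ mem_pL.2 (Or.inl le_rfl)
    have hyR : y ∈ pR x := hR ▸ mem_pR.2 (Or.inl le_rfl)
    rcases mem_pR.1 hyR with h1 | ⟨t, h1⟩ <;> rcases mem_pL.1 hyL with h2 | ⟨u, h2⟩ <;>
      apply mem_pB.2
    · exact Or.inr (Or.inr ⟨s, hs.trans (mul_le_mul' (mul_le_mul_left h1 s) h2)⟩)
    · refine Or.inr (Or.inr ⟨s * u, ?_⟩)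
      calc y ≤ y * s * y := hs
      _ ≤ x * s * (u * x) := mul_le_mul' (mul_le_mul_left h1 s) h2
      _ = x * (s * u) * x := by simp [mul_assoc]
    · refine Or.inr (Or.inr ⟨t * s, ?_⟩)
      calc y ≤ y * s * y := hs
      _ ≤ x * t * s * x := mul_le_mul' (mul_le_mul_left h1 s) h2
      _ = x * (t * s) * x := by simp [mul_assoc]
    · refine Or.inr (Or.inr ⟨t * (s * u), ?_⟩)
      calc y ≤ y * s * y := hs
      _ ≤ x * t * s * (u * x) := mul_le_mul' (mul_le_mul_left h1 s) h2
      _ = x * (t * (s * u)) * x := by simp [mul_assoc]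
  exact Set.Subset.antisymm (pB_subset_s10 (key b a hL.symm hR.symm)) (pB_subset_s10 (key a b hL hR))
end

section
/- In an ordered semigroup S, a bi-ideal B is minimal if and only if B is bi-simple, i.e., B (as an ordered semigroup in its own right) has no proper bi-ideal. -/
open Pointwise

variable {S : Type*} [Semigroup S] [PartialOrder S]
  [CovariantClass S S (· * ·) (· ≤ ·)]
  [CovariantClass S S (Function.swap (· * ·)) (· ≤ ·)]

theorem stmt17 (B : Set S) (hB : BIdeal B) :
    MinBIdeal B ↔
      ∀ T : Set S, T.Nonempty → T ⊆ B → T * T ⊆ T → T * B * T ⊆ T →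
        (∀ x ∈ B, (∃ h ∈ T, x ≤ h) → x ∈ T) → T = B := by
  obtain ⟨hBne, hBB, hBSB, hBcl⟩ := hB
  constructor
  · rintro ⟨-, hmin⟩ T hTne hTB hTT hTBT hTcl
    set K : Set S := ocl (T * B * T) with hKdef
    have hmemK : ∀ {x : S}, x ∈ K ↔ ∃ h ∈ T * B * T, x ≤ h := fun {x} => Iff.rfl
    have hKB : K ⊆ B := by
      rintro x ⟨h, hh, hxh⟩
      have hhB : h ∈ B := by
        obtain ⟨u, hu, t, ht, rfl⟩ := hh
        obtain ⟨t1, ht1, b, hb, rfl⟩ := hu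
        exact hBB (Set.mul_mem_mul (hBB (Set.mul_mem_mul (hTB ht1) hb)) (hTB ht))
      rw [← hBcl]; exact ⟨h, hhB, hxh⟩
    have hKbi : BIdeal K := by
      refine ⟨?_, ?_, ?_, ?_⟩
      · obtain ⟨t, ht⟩ := hTne
        obtain ⟨b, hb⟩ := hBne
        exact ⟨t * b * t, ⟨t * b * t, Set.mul_mem_mul (Set.mul_mem_mul ht hb) ht, le_refl _⟩⟩
      · rintro x ⟨y, ⟨h1, hh1, hy1⟩, z, ⟨h2, hh2, hz2⟩, rfl⟩
        obtain ⟨u1, hu1, t1', ht1', rfl⟩ := hh1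
        obtain ⟨t1, ht1, b1, hb1, rfl⟩ := hu1
        obtain ⟨u2, hu2, t2', ht2', rfl⟩ := hh2
        obtain ⟨t2, ht2, b2, hb2, rfl⟩ := hu2
        refine ⟨t1 * (b1 * (t1' * (t2 * b2))) * t2', ?_, ?_⟩
        · refine Set.mul_mem_mul (Set.mul_mem_mul ht1 ?_) ht2'
          exact hBB (Set.mul_mem_mul hb1 (hBB (Set.mul_mem_mul (hTB ht1') (hBB (Set.mul_mem_mul (hTB ht2) hb2)))))
        · calc y * z ≤ (t1 * b1 * t1') * (t2 * b2 * t2') := mul_le_mul' hy1 hz2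
            _ = t1 * (b1 * (t1' * (t2 * b2))) * t2' := by simp [mul_assoc]
      · rintro x ⟨u, hu, z, ⟨h2, hh2, hz2⟩, rfl⟩
        obtain ⟨y, ⟨h1, hh1, hy1⟩, s, -, rfl⟩ := hu
        obtain ⟨u1, hu1, t1', ht1', rfl⟩ := hh1
        obtain ⟨t1, ht1, b1, hb1, rfl⟩ := hu1
        obtain ⟨u2, hu2, t2', ht2', rfl⟩ := hh2
        obtain ⟨t2, ht2, b2, hb2, rfl⟩ := hu2
        refine ⟨t1 * (b1 * (t1' * s * (t2 * b2))) * t2', ?_, ?_⟩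
        · refine Set.mul_mem_mul (Set.mul_mem_mul ht1 ?_) ht2'
          refine hBB (Set.mul_mem_mul hb1 ?_)
          have : t1' * s * (t2 * b2) ∈ B * Set.univ * B :=
            Set.mul_mem_mul (Set.mul_mem_mul (hTB ht1') (Set.mem_univ s))
              (hBB (Set.mul_mem_mul (hTB ht2) hb2))
          exact hBSB this
        · calc y * s * z ≤ (t1 * b1 * t1') * s * (t2 * b2 * t2') :=
                mul_le_mul' (mul_le_mul' hy1 (le_refl s)) hz2
            _ = t1 * (b1 * (t1' * s * (t2 * b2))) * t2' := by simp [mul_assoc]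
      · apply Set.Subset.antisymm
        · rintro x ⟨h, ⟨g, hg, hhg⟩, hxh⟩
          exact ⟨g, hg, le_trans hxh hhg⟩
        · intro x hx; exact ⟨x, hx, le_refl x⟩
    have hKeq : K = B := hmin K hKbi hKB
    apply Set.Subset.antisymm hTB
    intro x hxB
    have hxK : x ∈ K := hKeq ▸ hxB
    obtain ⟨h, hh, hxh⟩ := hxK
    exact hTcl x hxB ⟨h, hTBT hh, hxh⟩
  · intro hsimp
    refine ⟨⟨hBne, hBB, hBSB, hBcl⟩, fun K hK hKB => ?_⟩
    obtain ⟨hKne, hKK, hKSK, hKcl⟩ := hK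
    refine hsimp K hKne hKB hKK ?_ ?_
    · intro x hx
      apply hKSK
      obtain ⟨u, hu, k2, hk2, rfl⟩ := hx
      obtain ⟨k1, hk1, b, hb, rfl⟩ := hu
      exact Set.mul_mem_mul (Set.mul_mem_mul hk1 (Set.mem_univ b)) hk2
    · intro x _ hx
      rw [← hKcl]; exact hx
end
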